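/- Let f, g, h be non-constant meromorphic functions on ℂ satisfying f^n + g^m + h^k = 1 with min{n, m, k} ≥ 6 and with f^n, g^m, h^k linearly independent over ℂ, let D = W(f^n, g^m, h^k) be their Wronskian, and let z₀ ∈ ℂ be a zero or pole of at least one of f, g, h, with p, q, t the orders of f, g, h at z₀. If max{p, q, t} = 0 and min{p, q, t} < 0, then A(z₀) ≤ 0. -/

import Mathlib

/-- The order of a meromorphic function at a point: the exponent of the leading term of
the Laurent expansion (negative at a pole, positive at a zero, `0` otherwise; by
convention `0` if the function is not meromorphic at the point or vanishes identically
near it). -/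
noncomputable def meroOrd (f : ℂ → ℂ) (z : ℂ) : ℤ :=
  open Classical in
  if h : MeromorphicAt f z then WithTop.untopD 0 (meromorphicOrderAt f z) else 0

/-- The pole multiplicity `U(F, z₀) = max (−ord(F, z₀), 0)`. -/
noncomputable def poleMult (f : ℂ → ℂ) (z : ℂ) : ℕ := (-(meroOrd f z)).toNat

/-- The zero multiplicity `U(1/F, z₀) = max (ord(F, z₀), 0)`. -/
noncomputable def zeroMult (f : ℂ → ℂ) (z : ℂ) : ℕ := (meroOrd f z).toNat

/-- The Wronskian `W(F₁, F₂, F₃)`: the determinant of the 3×3 matrix whose rows are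
the functions, their first derivatives and their second derivatives. -/
noncomputable def wronskian3 (F₁ F₂ F₃ : ℂ → ℂ) (z : ℂ) : ℂ :=
  Matrix.det !![F₁ z, F₂ z, F₃ z;
                deriv F₁ z, deriv F₂ z, deriv F₃ z;
                deriv (deriv F₁) z, deriv (deriv F₂) z, deriv (deriv F₃) z]

/-- The quantity
`A(z₀) = 3(U(1/F₁) + U(1/F₂) + U(1/F₃)) + 3U(D) − 3U(1/D) − 2(U(F₁) + U(F₂) + U(F₃))`
at `z₀`, where `D = W(F₁, F₂, F₃)`. -/
noncomputable def nevanA (F₁ F₂ F₃ : ℂ → ℂ) (z : ℂ) : ℤ :=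
  3 * ((zeroMult F₁ z : ℤ) + (zeroMult F₂ z : ℤ) + (zeroMult F₃ z : ℤ))
    + 3 * (poleMult (wronskian3 F₁ F₂ F₃) z : ℤ)
    - 3 * (zeroMult (wronskian3 F₁ F₂ F₃) z : ℤ)
    - 2 * ((poleMult F₁ z : ℤ) + (poleMult F₂ z : ℤ) + (poleMult F₃ z : ℤ))

/-!
At `z₀` the orders of `F₁ = f^n`, `F₂ = g^m`, `F₃ = h^k` are `np, mq, kt ≤ 0`, one of them
zero and one negative. Since `F₁ + F₂ + F₃ = 1`, a pole of one `Fᵢ` must be cancelled by a pole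
of the same order of another, so two of them have a pole of the same order `a ≥ 6` and the
third, say `F₁`, has order `0`. Adding the first two columns of the Wronskian matrix to the
third turns that column into `(1, 0, 0)`, so `D = F₁' F₂'' - F₁'' F₂'` has a pole of order
at most `a + 2`, and `A(z₀) ≤ 3(a + 2) - 4a = 6 - a ≤ 0`.
-/

open Filter Topology

section Order

variable {𝕜 : Type*} [NontriviallyNormedField 𝕜] {E : Type*} [NormedAddCommGroup E]
  [NormedSpace 𝕜 E] {f : 𝕜 → E} {x : 𝕜}

theorem meromorphicOrderAt_deriv_nonneg [CompleteSpace E] (hf : MeromorphicAt f x)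
    (h : 0 ≤ meromorphicOrderAt f x) : 0 ≤ meromorphicOrderAt (deriv f) x := by
  have hg := hf.meromorphicOrderAt_nonneg_iff_analyticAt_toMeromorphicNFAt.1 h
  rw [meromorphicOrderAt_congr hf.eq_nhdsNE_toMeromorphicNFAt.nhdsNE_deriv]
  exact hg.deriv.meromorphicOrderAt_nonneg

theorem le_meromorphicOrderAt_deriv [CompleteSpace E] [CharZero 𝕜] (hf : MeromorphicAt f x) {d : ℤ}
    (h : d ≤ meromorphicOrderAt f x) :
    ((d - 1 : ℤ) : WithTop ℤ) ≤ meromorphicOrderAt (deriv f) x := by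
  cases ho : meromorphicOrderAt f x with
  | top =>
    have hf0 : f =ᶠ[𝓝[≠] x] 0 := meromorphicOrderAt_eq_top_iff.1 ho
    rw [meromorphicOrderAt_eq_top_iff.2]
    · exact le_top
    · filter_upwards [hf0.nhdsNE_deriv] with z hz
      simp [hz]
  | coe n =>
    rw [ho, WithTop.coe_le_coe] at h
    rcases eq_or_ne n 0 with rfl | hn
    · exact le_trans (by exact_mod_cast (by omega : d - 1 ≤ 0))
        (meromorphicOrderAt_deriv_nonneg hf (by simp [ho]))
    · rw [meromorphicOrderAt_deriv_eq_sub_one (by exact_mod_cast hn) ho]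
      exact_mod_cast (by omega : d - 1 ≤ n - 1)

theorem le_meromorphicOrderAt_sub {g : 𝕜 → E} (hf : MeromorphicAt f x) (hg : MeromorphicAt g x)
    {d : WithTop ℤ} (hd : d ≤ meromorphicOrderAt f x) (he : d ≤ meromorphicOrderAt g x) :
    d ≤ meromorphicOrderAt (f - g) x := by
  rw [sub_eq_add_neg]
  refine le_trans ?_ (meromorphicOrderAt_add hf hg.neg)
  rw [← meromorphicOrderAt_neg]
  exact le_min hd he

end Order

section Mul

variable {𝕜 : Type*} [NontriviallyNormedField 𝕜] {f g : 𝕜 → 𝕜} {x : 𝕜}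

theorem add_le_meromorphicOrderAt_mul (hf : MeromorphicAt f x) (hg : MeromorphicAt g x)
    {d e : WithTop ℤ} (hd : d ≤ meromorphicOrderAt f x) (he : e ≤ meromorphicOrderAt g x) :
    d + e ≤ meromorphicOrderAt (f * g) x := by
  rw [meromorphicOrderAt_mul hf hg]
  exact add_le_add hd he

end Mul

theorem meroOrd_eq_untopD (f : ℂ → ℂ) (z : ℂ) :
    meroOrd f z = (meromorphicOrderAt f z).untopD 0 := by
  by_cases hf : MeromorphicAt f z
  · rw [meroOrd, dif_pos hf]
  · rw [meroOrd, dif_neg hf, meromorphicOrderAt_of_not_meromorphicAt hf]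
    rfl

theorem meroOrd_neg (f : ℂ → ℂ) (z : ℂ) : meroOrd (-f) z = meroOrd f z := by
  rw [meroOrd_eq_untopD, meroOrd_eq_untopD, ← meromorphicOrderAt_neg]

theorem meroOrd_zpow {f : ℂ → ℂ} {z : ℂ} (hf : MeromorphicAt f z) (n : ℤ) :
    meroOrd (fun w => f w ^ n) z = n * meroOrd f z := by
  show meroOrd (f ^ n) z = _
  rw [meroOrd_eq_untopD, meroOrd_eq_untopD, meromorphicOrderAt_zpow hf, WithTop.untopD_zero_mul]
  rfl

theorem meroOrd_nonneg_iff {f : ℂ → ℂ} {z : ℂ} :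
    0 ≤ meroOrd f z ↔ 0 ≤ meromorphicOrderAt f z := by
  rw [meroOrd_eq_untopD]
  cases meromorphicOrderAt f z <;> simp

theorem meroOrd_eq_iff_of_ne_zero {f : ℂ → ℂ} {z : ℂ} {v : ℤ} (hv : v ≠ 0) :
    meroOrd f z = v ↔ meromorphicOrderAt f z = v := by
  rw [meroOrd_eq_untopD]
  cases meromorphicOrderAt f z <;> simp [eq_comm, hv]

theorem le_meroOrd_of_le {f : ℂ → ℂ} {z : ℂ} {d : ℤ} (hd : d ≤ 0)
    (h : d ≤ meromorphicOrderAt f z) : d ≤ meroOrd f z := by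
  rw [meroOrd_eq_untopD]
  cases ho : meromorphicOrderAt f z with
  | top => exact hd
  | coe v => rw [ho] at h; exact_mod_cast h

section SumEqConst

variable {𝕜 : Type*} [NontriviallyNormedField 𝕜] {E : Type*} [NormedAddCommGroup E]
  [NormedSpace 𝕜 E] [CompleteSpace E] {F₁ F₂ F₃ : 𝕜 → E} {x : 𝕜}

theorem deriv_add_add_eventually_eq_zero {c : E} (h₁ : MeromorphicAt F₁ x)
    (h₂ : MeromorphicAt F₂ x) (hsum : ∀ᶠ z in 𝓝[≠] x, F₁ z + F₂ z + F₃ z = c) :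
    ∀ᶠ z in 𝓝[≠] x, deriv F₁ z + deriv F₂ z + deriv F₃ z = 0 := by
  have h₃ : F₃ =ᶠ[𝓝[≠] x] fun z => c - F₁ z - F₂ z :=
    hsum.mono fun z hz => by
      show F₃ z = c - F₁ z - F₂ z
      rw [← hz]
      abel
  filter_upwards [h₃.nhdsNE_deriv, h₁.eventually_analyticAt, h₂.eventually_analyticAt]
    with z hz a₁ a₂
  rw [hz, deriv_fun_sub (a₁.differentiableAt.const_sub c) a₂.differentiableAt, deriv_const_sub]
  abel

end SumEqConst

theorem det_fin_three_of_row_sums {R : Type*} [CommRing R] {a₁ a₂ a₃ b₁ b₂ b₃ c₁ c₂ c₃ : R}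
    (ha : a₁ + a₂ + a₃ = 1) (hb : b₁ + b₂ + b₃ = 0) (hc : c₁ + c₂ + c₃ = 0) :
    !![a₁, a₂, a₃; b₁, b₂, b₃; c₁, c₂, c₃].det = b₁ * c₂ - c₁ * b₂ := by
  obtain rfl : a₃ = 1 - a₁ - a₂ := by linear_combination ha
  obtain rfl : b₃ = -b₁ - b₂ := by linear_combination hb
  obtain rfl : c₃ = -c₁ - c₂ := by linear_combination hc
  simp only [Matrix.det_fin_three, Fin.isValue, Matrix.of_apply, Matrix.cons_val',
    Matrix.cons_val_zero, Matrix.cons_val_fin_one, Matrix.cons_val_one, Matrix.cons_val]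
  ring

section Wronskian

variable {F₁ F₂ F₃ : ℂ → ℂ} {x : ℂ}

theorem wronskian3_eventuallyEq_of_sum_eq_one (h₁ : MeromorphicAt F₁ x)
    (h₂ : MeromorphicAt F₂ x) (hsum : ∀ᶠ z in 𝓝[≠] x, F₁ z + F₂ z + F₃ z = 1) :
    wronskian3 F₁ F₂ F₃ =ᶠ[𝓝[≠] x]
      deriv F₁ * deriv (deriv F₂) - deriv (deriv F₁) * deriv F₂ := by
  have hsum' := deriv_add_add_eventually_eq_zero h₁ h₂ hsum
  have hsum'' := deriv_add_add_eventually_eq_zero h₁.deriv h₂.deriv hsum'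
  filter_upwards [hsum, hsum', hsum''] with z e e' e''
  exact det_fin_three_of_row_sums e e' e''

theorem le_meromorphicOrderAt_wronskian3 (h₁ : MeromorphicAt F₁ x) (h₂ : MeromorphicAt F₂ x)
    (hsum : ∀ᶠ z in 𝓝[≠] x, F₁ z + F₂ z + F₃ z = 1) (hF₁ : 0 ≤ meromorphicOrderAt F₁ x)
    {v : ℤ} (hF₂ : v ≤ meromorphicOrderAt F₂ x) :
    ((v - 2 : ℤ) : WithTop ℤ) ≤ meromorphicOrderAt (wronskian3 F₁ F₂ F₃) x := by
  rw [meromorphicOrderAt_congr (wronskian3_eventuallyEq_of_sum_eq_one h₁ h₂ hsum)]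
  have d₁ := meromorphicOrderAt_deriv_nonneg h₁ hF₁
  have d₁' := meromorphicOrderAt_deriv_nonneg h₁.deriv d₁
  have d₂ := le_meromorphicOrderAt_deriv h₂ hF₂
  have d₂' := le_meromorphicOrderAt_deriv h₂.deriv d₂
  refine le_meromorphicOrderAt_sub (h₁.deriv.mul h₂.deriv.deriv) (h₁.deriv.deriv.mul h₂.deriv)
    ?_ ?_
  · simpa [sub_sub, one_add_one_eq_two] using
      add_le_meromorphicOrderAt_mul h₁.deriv h₂.deriv.deriv d₁ d₂'
  · refine le_trans ?_ (add_le_meromorphicOrderAt_mul h₁.deriv.deriv h₂.deriv d₁' d₂)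
    rw [zero_add]
    exact_mod_cast (by omega : v - 2 ≤ v - 1)

end Wronskian

theorem meromorphicOrderAt_eq_of_sum_eq_one {F₁ F₂ F₃ : ℂ → ℂ} {x : ℂ}
    (h₁ : MeromorphicAt F₁ x) (hsum : ∀ᶠ z in 𝓝[≠] x, F₁ z + F₂ z + F₃ z = 1)
    (hF₁ : 0 ≤ meromorphicOrderAt F₁ x) (hF₂ : meromorphicOrderAt F₂ x < 0) :
    meromorphicOrderAt F₃ x = meromorphicOrderAt F₂ x := by
  have h₃ : F₃ =ᶠ[𝓝[≠] x] (1 - F₁) + -F₂ :=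
    hsum.mono fun z hz => by
      show F₃ z = 1 - F₁ z + -F₂ z
      linear_combination hz
  have h1 : MeromorphicAt (1 : ℂ → ℂ) x := MeromorphicAt.const 1 x
  have h1F₁ : 0 ≤ meromorphicOrderAt (1 - F₁) x :=
    le_meromorphicOrderAt_sub h1 h₁ analyticAt_const.meromorphicOrderAt_nonneg hF₁
  have hlt : meromorphicOrderAt (-F₂) x < meromorphicOrderAt (1 - F₁) x := by
    rw [← meromorphicOrderAt_neg]
    exact hF₂.trans_le h1F₁
  rw [meromorphicOrderAt_congr h₃, meromorphicOrderAt_add_eq_right_of_lt (h1.sub h₁) hlt,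
    ← meromorphicOrderAt_neg]

theorem wronskian3_swap₁₂ (F₁ F₂ F₃ : ℂ → ℂ) : wronskian3 F₂ F₁ F₃ = -wronskian3 F₁ F₂ F₃ := by
  funext z
  simp only [wronskian3, Matrix.det_fin_three, Matrix.of_apply, Matrix.cons_val',
    Matrix.cons_val_zero, Matrix.cons_val_one, Matrix.cons_val_two, Matrix.empty_val',
    Matrix.cons_val_fin_one, Matrix.head_cons, Matrix.tail_cons, Pi.neg_apply]
  ring

theorem wronskian3_swap₂₃ (F₁ F₂ F₃ : ℂ → ℂ) : wronskian3 F₁ F₃ F₂ = -wronskian3 F₁ F₂ F₃ := by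
  funext z
  simp only [wronskian3, Matrix.det_fin_three, Matrix.of_apply, Matrix.cons_val',
    Matrix.cons_val_zero, Matrix.cons_val_one, Matrix.cons_val_two, Matrix.empty_val',
    Matrix.cons_val_fin_one, Matrix.head_cons, Matrix.tail_cons, Pi.neg_apply]
  ring

theorem nevanA_swap₁₂ (F₁ F₂ F₃ : ℂ → ℂ) (z : ℂ) : nevanA F₂ F₁ F₃ z = nevanA F₁ F₂ F₃ z := by
  rw [nevanA, nevanA, wronskian3_swap₁₂]
  simp only [zeroMult, poleMult, meroOrd_neg]
  ring

theorem nevanA_swap₂₃ (F₁ F₂ F₃ : ℂ → ℂ) (z : ℂ) : nevanA F₁ F₃ F₂ z = nevanA F₁ F₂ F₃ z := by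
  rw [nevanA, nevanA, wronskian3_swap₂₃]
  simp only [zeroMult, poleMult, meroOrd_neg]
  ring

theorem nevanA_nonpos_of_sum_eq_one {F₁ F₂ F₃ : ℂ → ℂ} {x : ℂ}
    (h₁ : MeromorphicAt F₁ x) (h₂ : MeromorphicAt F₂ x)
    (hsum : ∀ᶠ z in 𝓝[≠] x, F₁ z + F₂ z + F₃ z = 1)
    (hF₁ : meroOrd F₁ x = 0) (hF₂ : meroOrd F₂ x ≤ -6) :
    nevanA F₁ F₂ F₃ x ≤ 0 := by
  have o₁ : 0 ≤ meromorphicOrderAt F₁ x := meroOrd_nonneg_iff.1 hF₁.ge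
  have o₂ : meromorphicOrderAt F₂ x = meroOrd F₂ x :=
    (meroOrd_eq_iff_of_ne_zero (by omega)).1 rfl
  have o₃ : meromorphicOrderAt F₃ x = meromorphicOrderAt F₂ x :=
    meromorphicOrderAt_eq_of_sum_eq_one h₁ hsum o₁
      (by rw [o₂]; exact_mod_cast (by omega : meroOrd F₂ x < 0))
  have hF₃ : meroOrd F₃ x = meroOrd F₂ x :=
    (meroOrd_eq_iff_of_ne_zero (by omega)).2 (o₃.trans o₂)
  have hW : meroOrd F₂ x - 2 ≤ meroOrd (wronskian3 F₁ F₂ F₃) x :=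
    le_meroOrd_of_le (by omega) (le_meromorphicOrderAt_wronskian3 h₁ h₂ hsum o₁ o₂.ge)
  unfold nevanA zeroMult poleMult
  omega

theorem nevanA_nonpos_of_max_zero_min_neg_general
    (f g h : ℂ → ℂ) (n m k : ℤ) (z₀ : ℂ)
    (hf : MeromorphicOn f Set.univ) (hg : MeromorphicOn g Set.univ)
    (hh : MeromorphicOn h Set.univ)
    (hmin : 6 ≤ min n (min m k))
    (heq : ∀ z : ℂ, AnalyticAt ℂ f z → AnalyticAt ℂ g z → AnalyticAt ℂ h z →
      f z ^ n + g z ^ m + h z ^ k = 1)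
    (p q t : ℤ) (hp : p = meroOrd f z₀) (hq : q = meroOrd g z₀) (ht : t = meroOrd h z₀)
    (hmaxpqt : max p (max q t) = 0) (hminpqt : min p (min q t) < 0) :
    nevanA (fun z => f z ^ n) (fun z => g z ^ m) (fun z => h z ^ k) z₀ ≤ 0 := by
  have hf₀ := hf z₀ trivial
  have hg₀ := hg z₀ trivial
  have hh₀ := hh z₀ trivial
  have hsum : ∀ᶠ z in 𝓝[≠] z₀, f z ^ n + g z ^ m + h z ^ k = 1 := by
    filter_upwards [hf₀.eventually_analyticAt, hg₀.eventually_analyticAt,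
      hh₀.eventually_analyticAt] with z af ag ah using heq z af ag ah
  have of := meroOrd_zpow hf₀ n
  have og := meroOrd_zpow hg₀ m
  have oh := meroOrd_zpow hh₀ k
  rw [← hp] at of
  rw [← hq] at og
  rw [← ht] at oh
  have hexp : 6 ≤ n ∧ 6 ≤ m ∧ 6 ≤ k := by omega
  rcases (by omega : p = 0 ∧ (q < 0 ∨ t < 0) ∨ p < 0 ∧ (q = 0 ∨ t = 0))
    with ⟨hp₀, hq₀ | ht₀⟩ | ⟨hp₀, hq₀ | ht₀⟩
  · exact nevanA_nonpos_of_sum_eq_one (hf₀.zpow n) (hg₀.zpow m) hsum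
      (by simp [of, hp₀]) (by rw [og]; nlinarith)
  · rw [← nevanA_swap₂₃]
    exact nevanA_nonpos_of_sum_eq_one (hf₀.zpow n) (hh₀.zpow k)
      (hsum.mono fun z hz => by linear_combination hz) (by simp [of, hp₀]) (by rw [oh]; nlinarith)
  · rw [← nevanA_swap₁₂]
    exact nevanA_nonpos_of_sum_eq_one (hg₀.zpow m) (hf₀.zpow n)
      (hsum.mono fun z hz => by linear_combination hz) (by simp [og, hq₀]) (by rw [of]; nlinarith)
  · rw [← nevanA_swap₂₃, ← nevanA_swap₁₂]
    exact nevanA_nonpos_of_sum_eq_one (hh₀.zpow k) (hf₀.zpow n)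
      (hsum.mono fun z hz => by linear_combination hz) (by simp [oh, ht₀]) (by rw [of]; nlinarith)

/-- **Lemma 2.8.** Under the standing hypotheses (meromorphic non-constant `f, g, h`
with `f^n + g^m + h^k = 1`, `min {n,m,k} ≥ 6`, `f^n, g^m, h^k` linearly independent),
let `z₀` be a zero or pole of at least one of `f, g, h` and let `p, q, t` be the
orders of `f, g, h` at `z₀`. If `max {p,q,t} = 0` and `min {p,q,t} < 0`, then
`A(z₀) ≤ 0`. -/
theorem nevanA_nonpos_of_max_zero_min_neg
    (f g h : ℂ → ℂ) (n m k : ℤ) (z₀ : ℂ)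
    (hf : MeromorphicOn f Set.univ) (hg : MeromorphicOn g Set.univ)
    (hh : MeromorphicOn h Set.univ)
    (hfc : ¬ ∃ c : ℂ, ∀ z : ℂ, AnalyticAt ℂ f z → f z = c)
    (hgc : ¬ ∃ c : ℂ, ∀ z : ℂ, AnalyticAt ℂ g z → g z = c)
    (hhc : ¬ ∃ c : ℂ, ∀ z : ℂ, AnalyticAt ℂ h z → h z = c)
    (hmin : 6 ≤ min n (min m k))
    (heq : ∀ z : ℂ, AnalyticAt ℂ f z → AnalyticAt ℂ g z → AnalyticAt ℂ h z →
      f z ^ n + g z ^ m + h z ^ k = 1)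
    (hind : ∀ a b c : ℂ,
      (∀ z : ℂ, AnalyticAt ℂ f z → AnalyticAt ℂ g z → AnalyticAt ℂ h z →
        a * f z ^ n + b * g z ^ m + c * h z ^ k = 0) →
      a = 0 ∧ b = 0 ∧ c = 0)
    (p q t : ℤ) (hp : p = meroOrd f z₀) (hq : q = meroOrd g z₀) (ht : t = meroOrd h z₀)
    (hzp : p ≠ 0 ∨ q ≠ 0 ∨ t ≠ 0)
    (hmaxpqt : max p (max q t) = 0) (hminpqt : min p (min q t) < 0) :
    nevanA (fun z => f z ^ n) (fun z => g z ^ m) (fun z => h z ^ k) z₀ ≤ 0 :=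
  nevanA_nonpos_of_max_zero_min_neg_general f g h n m k z₀ hf hg hh hmin heq p q t hp hq ht hmaxpqt
    hminpqt
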